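/- The partition graph G_n contains no clique of size 7 for 1 ≤ n ≤ 21, and G_22 contains exactly one clique of size 7; that is, c_7(n) = 0 for 1 ≤ n ≤ 21 and c_7(22) = 1. -/

import Mathlib

/-- `nu` is obtained from `lam` by decreasing a single part by 1
(deleting the part if it becomes 0). -/
def stepDown {n : ℕ} (lam : Nat.Partition n) (nu : Nat.Partition (n - 1)) : Prop :=
  ∃ k ∈ lam.parts, nu.parts = Multiset.filter (· ≠ 0) ((k - 1) ::ₘ lam.parts.erase k)

/-- The partition graph `G_n`: vertices are the integer partitions of `n`, and two
distinct partitions are adjacent iff some partition of `n - 1` is obtained from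
each of them by decreasing a single part by 1 (an elementary transfer of one cell). -/
def partitionGraph (n : ℕ) : SimpleGraph (Nat.Partition n) where
  Adj lam mu := lam ≠ mu ∧ ∃ nu : Nat.Partition (n - 1), stepDown lam nu ∧ stepDown mu nu
  symm := ⟨by
    rintro a b ⟨hne, nu, ha, hb⟩
    exact ⟨hne.symm, nu, hb, ha⟩⟩
  loopless := ⟨by
    rintro a ⟨hne, _⟩
    exact hne rfl⟩

/-- `cliqueCount n r = c_r(n)`, the number of cliques of size `r` in `G_n`. -/
noncomputable def cliqueCount (n r : ℕ) : ℕ :=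
  Set.ncard {s : Finset (Nat.Partition n) | (partitionGraph n).IsNClique r s}

/-!
Encode a partition by the multiset of column indices of its cells. Moving one cell between parts
then means that the two multisets cover a common multiset, so the cliques of `G_n` are cliques in
the covering graph of the distributive lattice of multisets, graded by `card`. A modularity
argument in this lattice shows that a clique with at least two members consists either of upper
covers `a ::ₘ u` of one multiset `u` or of lower covers of one multiset `v`.

In the first case the `k` added cells lie in distinct columns `a`, and each `a > 0` is a part of
the partition encoded by `u`; so `u` contains the partition with distinct parts `A`, whence
`n - 1 ≥ 0 + 1 + ⋯ + (k - 1)`, with equality only for `A = {0, …, k - 1}` and `u` the staircase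
`(k - 1, …, 1)`. The second case similarly needs `n + 1 ≥ 1 + ⋯ + k`. For `k = 7` this gives
`n ≥ 22`, and for `n = 22` the only clique is the staircase `(6, 5, 4, 3, 2, 1)` with one cell
added.
-/

open Finset

namespace Multiset

variable {α : Type*} {s t u x y z : Multiset α} {N : ℕ}

lemma covBy_iff_le_card : s ⋖ t ↔ s ≤ t ∧ card t = card s + 1 := by
  refine ⟨fun h ↦ ⟨h.le, (Nat.covBy_iff_add_one_eq.1 h.card_multiset).symm⟩, fun ⟨hle, hc⟩ ↦ ?_⟩
  obtain ⟨w, rfl⟩ := le_iff_exists_add.1 hle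
  obtain ⟨a, rfl⟩ := card_eq_one.1 (by simpa using hc)
  rw [add_comm, singleton_add]
  exact covBy_cons s a

variable [DecidableEq α]

lemma card_union_add_card_inter (s t : Multiset α) :
    card (s ∪ t) + card (s ∩ t) = card s + card t := by
  rw [← card_add, union_add_inter, card_add]

lemma inter_eq_of_covBy (hs : u ⋖ s) (ht : u ⋖ t) (hst : s ≠ t) : s ∩ t = u := by
  obtain ⟨a, rfl⟩ := hs.exists_multiset_cons
  obtain ⟨b, rfl⟩ := ht.exists_multiset_cons
  have hab : a ≠ b := by rintro rfl; exact hst rfl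
  ext j
  rw [count_inter, count_cons, count_cons]
  grind

lemma inter_le_or_le_union (hz : card z = N) (hxy : card (x ∩ y) + 1 = N)
    (hxz : card (x ∩ z) + 1 = N) (hyz : card (y ∩ z) + 1 = N) :
    x ∩ y ≤ z ∨ z ≤ x ∪ y := by
  -- `card` is modular: either `(x ∩ z) ∩ (y ∩ z)` is as large as `x ∩ y` (hence equal to it),
  -- or `(x ∩ z) ∪ (y ∩ z)` is as large as `z` (hence equal to it).
  have hle : x ∩ z ∩ (y ∩ z) ≤ x ∩ y := inf_le_inf inter_le_left inter_le_left
  have hcard := card_union_add_card_inter (x ∩ z) (y ∩ z)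
  by_cases h : card (x ∩ y) ≤ card (x ∩ z ∩ (y ∩ z))
  · left
    rw [← eq_of_le_of_card_le hle h]
    exact inter_le_left.trans inter_le_right
  · right
    have hz : x ∩ z ∪ y ∩ z = z :=
      eq_of_le_of_card_le (union_le inter_le_right inter_le_right) (by omega)
    rw [← hz]
    exact sup_le_sup inter_le_left inter_le_left

lemma forall_inter_le_or_forall_le_union {S : Set (Multiset α)}
    (hcard : ∀ s ∈ S, card s = N) (hadj : S.Pairwise fun s t ↦ card (s ∩ t) + 1 = N)
    (hx : x ∈ S) (hy : y ∈ S) (hxy : x ≠ y) :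
    (∀ z ∈ S, x ∩ y ≤ z) ∨ ∀ z ∈ S, z ≤ x ∪ y := by
  have triangle : ∀ a ∈ S, ∀ b ∈ S, a ≠ b → ∀ z ∈ S, a ∩ b ≤ z ∨ z ≤ a ∪ b := by
    intro a ha b hb hab z hz
    obtain rfl | hza := eq_or_ne z a
    · exact Or.inl inter_le_left
    obtain rfl | hzb := eq_or_ne z b
    · exact Or.inl inter_le_right
    exact inter_le_or_le_union (hcard z hz) (hadj ha hb hab) (hadj ha hz hza.symm)
      (hadj hb hz hzb.symm)
  by_contra! ⟨⟨z₁, hz₁, hxyz₁⟩, ⟨z₂, hz₂, hz₂xy⟩⟩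
  have hz₁xy : z₁ ≤ x ∪ y := (triangle x hx y hy hxy z₁ hz₁).resolve_left hxyz₁
  have hxyz₂ : x ∩ y ≤ z₂ := (triangle x hx y hy hxy z₂ hz₂).resolve_right hz₂xy
  have hz₂x : z₂ ≠ x := by rintro rfl; exact hz₂xy le_union_left
  have hz₂y : z₂ ≠ y := by rintro rfl; exact hz₂xy le_union_right
  have hz₁x : z₁ ≤ x ∪ z₂ := by
    refine (triangle x hx z₂ hz₂ hz₂x.symm z₁ hz₁).resolve_left fun h ↦ hxyz₁ ?_
    rwa [eq_of_le_of_card_le (le_inter inter_le_left hxyz₂)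
      (by have := hadj hx hy hxy; have := hadj hx hz₂ hz₂x.symm; omega)]
  have hz₁y : z₁ ≤ y ∪ z₂ := by
    refine (triangle y hy z₂ hz₂ hz₂y.symm z₁ hz₁).resolve_left fun h ↦ hxyz₁ ?_
    rwa [eq_of_le_of_card_le (le_inter inter_le_right hxyz₂)
      (by have := hadj hx hy hxy; have := hadj hy hz₂ hz₂y.symm; omega)]
  have hz₁z₂ : z₁ ≤ z₂ :=
    calc z₁ ≤ (x ∪ z₂) ∩ (y ∪ z₂) := le_inter hz₁x hz₁y
      _ = x ∩ y ∪ z₂ := (sup_inf_right x y z₂).symm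
      _ = z₂ := eq_union_right hxyz₂
  exact hz₂xy (eq_of_le_of_card_le hz₁z₂ (by rw [hcard z₁ hz₁, hcard z₂ hz₂]) ▸ hz₁xy)

theorem exists_covBy_or_covBy_of_pairwise {S : Set (Multiset α)}
    (hS : S.Pairwise fun s t ↦ ∃ u, u ⋖ s ∧ u ⋖ t) (hS₂ : S.Nontrivial) :
    (∃ u, ∀ s ∈ S, u ⋖ s) ∨ ∃ v, ∀ s ∈ S, s ⋖ v := by
  obtain ⟨x, hx, y, hy, hxy⟩ := hS₂
  have hcard : ∀ s ∈ S, card s = card x := by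
    intro s hs
    obtain rfl | hsx := eq_or_ne s x
    · rfl
    obtain ⟨u, hus, hux⟩ := hS hs hx hsx
    rw [(covBy_iff_le_card.1 hus).2, (covBy_iff_le_card.1 hux).2]
  have hadj : S.Pairwise fun s t ↦ card (s ∩ t) + 1 = card x := by
    intro s hs t ht hst
    obtain ⟨u, hus, hut⟩ := hS hs ht hst
    rw [inter_eq_of_covBy hus hut hst, ← hcard s hs, (covBy_iff_le_card.1 hus).2]
  have hxy' := hadj hx hy hxy
  have hunion : card (x ∪ y) = card x + 1 := by
    have := card_union_add_card_inter x y
    rw [hcard y hy] at this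
    omega
  refine (forall_inter_le_or_forall_le_union hcard hadj hx hy hxy).imp
    (fun h ↦ ⟨x ∩ y, fun z hz ↦ covBy_iff_le_card.2 ⟨h z hz, by rw [hcard z hz, hxy']⟩⟩)
    (fun h ↦ ⟨x ∪ y, fun z hz ↦ covBy_iff_le_card.2 ⟨h z hz, by rw [hcard z hz, hunion]⟩⟩)

end Multiset

lemma Finset.sum_range_card_le_sum (A : Finset ℕ) : ∑ i ∈ range #A, i ≤ ∑ a ∈ A, a := by
  induction A using Finset.induction_on_max with
  | empty => simp
  | insert a s hlt ih =>
    have ha : a ∉ s := fun h ↦ lt_irrefl a (hlt a h)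
    have hs : #s ≤ a := by
      simpa using card_le_card (fun x hx ↦ mem_range.2 (hlt x hx) : s ⊆ range a)
    rw [card_insert_of_notMem ha, sum_range_succ, sum_insert ha]
    omega

lemma Finset.eq_range_card_of_sum_le {A : Finset ℕ} (h : ∑ a ∈ A, a ≤ ∑ i ∈ range #A, i) :
    A = range #A := by
  refine eq_of_subset_of_card_le (fun a ha ↦ mem_range.2 ?_) (by simp)
  by_contra! hle
  have h₁ := sum_range_card_le_sum (A.erase a)
  rw [card_erase_of_mem ha] at h₁
  have h₂ := add_sum_erase A id ha
  have hA : 0 < #A := card_pos.2 ⟨a, ha⟩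
  have h₃ := sum_range_succ id (#A - 1)
  rw [Nat.sub_add_cancel hA] at h₃
  simp only [id] at h₂ h₃
  omega

lemma antitone_of_forall_ne_eq {β : Type*} [Preorder β] {g : ℕ → β} {f : ℕ → ℕ → β}
    {A : Finset ℕ} (hA : 2 < #A) (hf : ∀ a ∈ A, Antitone (f a))
    (hfg : ∀ a ∈ A, ∀ j ≠ a, f a j = g j) : Antitone g :=
  antitone_nat_of_succ_le fun j ↦ by
    obtain ⟨a, ha, haj⟩ := exists_mem_notMem_of_card_lt_card (card_le_two.trans_lt hA)
    simp only [mem_insert, mem_singleton, not_or] at haj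
    rw [← hfg a ha j (Ne.symm haj.1), ← hfg a ha (j + 1) (Ne.symm haj.2)]
    exact hf a ha j.le_succ

namespace Multiset

lemma count_bind_range (s : Multiset ℕ) (j : ℕ) :
    (s.bind range).count j = (s.bind range).count (j + 1) + s.count (j + 1) := by
  induction s using Multiset.induction_on with
  | empty => simp
  | cons a s ih =>
    simp only [cons_bind, count_add, count_cons, count_eq_of_nodup (nodup_range a), mem_range, ih]
    split_ifs <;> omega

lemma card_bind_range (s : Finset ℕ) : card (s.val.bind range) = ∑ p ∈ s, p := by
  rw [card_bind, Finset.sum_eq_multiset_sum]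
  simp

lemma filter_ne_zero_bind_range (s : Multiset ℕ) :
    (s.filter (· ≠ 0)).bind range = s.bind range := by
  induction s using Multiset.induction_on with
  | empty => simp
  | cons a s ih =>
    obtain rfl | ha := eq_or_ne a 0
    · simp [ih]
    · simp [filter_cons_of_pos, ha, ih]

variable {M : Multiset ℕ}

lemma card_filter_lt_le_count (hM : Antitone (M.count ·)) {D : Finset ℕ}
    (hD : ∀ p ∈ D, p ≠ 0 → M.count p < M.count (p - 1)) (j : ℕ) :
    #{p ∈ D | j < p} ≤ M.count j := by
  induction D using Finset.induction_on_min generalizing j with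
  | empty => simp
  | insert a s hlt ih =>
    have ih := ih (fun p hp ↦ hD p (mem_insert_of_mem hp))
    rw [filter_insert]
    split_ifs with hja
    · have ha : a ∉ s := fun h ↦ lt_irrefl a (hlt a h)
      have hs := ih a
      rw [filter_true_of_mem hlt] at hs
      rw [filter_true_of_mem fun p hp ↦ hja.trans (hlt p hp), card_insert_of_notMem ha]
      have hdesc := hD a (mem_insert_self a s) (by omega)
      have hanti : M.count (a - 1) ≤ M.count j := hM (by omega)
      omega
    · exact ih j

/-- An antitone count function makes `M` the column multiset of a partition, and `hD` says that
each nonzero `p ∈ D` is a part of that partition; the partition with parts `D` then fits inside. -/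
lemma bind_range_le (hM : Antitone (M.count ·)) {D : Finset ℕ}
    (hD : ∀ p ∈ D, p ≠ 0 → M.count p < M.count (p - 1)) : D.val.bind range ≤ M := by
  refine le_iff_count.2 fun j ↦ (le_of_eq ?_).trans (card_filter_lt_le_count hM hD j)
  rw [count_bind, card_filter, sum_eq_multiset_sum]
  simp [count_eq_of_nodup (nodup_range _)]

lemma bind_range_le_of_forall_cons {u : Multiset ℕ} {A : Finset ℕ} (hA : 2 < #A)
    (h : ∀ a ∈ A, Antitone ((a ::ₘ u).count ·)) : A.val.bind range ≤ u := by
  have hu : Antitone (u.count ·) :=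
    antitone_of_forall_ne_eq hA h fun a _ j hj ↦ count_cons_of_ne hj u
  refine bind_range_le hu fun a ha ha₀ ↦ ?_
  have : (a ::ₘ u).count a ≤ (a ::ₘ u).count (a - 1) := h a ha (Nat.sub_le a 1)
  rw [count_cons_self, count_cons_of_ne (by omega)] at this
  omega

lemma sum_add_one_le_card_of_forall_cons {v : Multiset ℕ} {C : Finset ℕ} (hC : 2 < #C)
    (h : ∀ c ∈ C, ∃ w, c ::ₘ w = v ∧ Antitone (w.count ·)) : ∑ c ∈ C, (c + 1) ≤ card v := by
  choose! w hwv hw using h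
  have hv : Antitone (v.count ·) :=
    antitone_of_forall_ne_eq hC hw fun c hc j hj ↦ by rw [← hwv c hc, count_cons_of_ne hj]
  have hle := card_le_card (bind_range_le hv (D := C.map (addRightEmbedding 1)) fun p hp _ ↦ ?_)
  · rwa [card_bind_range, sum_map] at hle
  obtain ⟨c, hc, rfl⟩ := mem_map.1 hp
  have : (w c).count (c + 1) ≤ (w c).count c := hw c hc c.le_succ
  rw [← hwv c hc]
  simp only [addRightEmbedding_apply, add_tsub_cancel_right, count_cons_self,
    count_cons_of_ne (show c + 1 ≠ c by omega)]
  omega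

end Multiset

namespace Nat.Partition

variable {n : ℕ}

/-- Column `j` occurs once for each part exceeding `j`, so its multiplicity is the `(j + 1)`-st
part of the conjugate partition, and adding a cell in column `j` adds `j` to the multiset. -/
def cols (l : Nat.Partition n) : Multiset ℕ := l.parts.bind Multiset.range

lemma card_cols (l : Nat.Partition n) : Multiset.card l.cols = n := by
  simp [cols, Multiset.card_bind, l.parts_sum]

lemma antitone_count_cols (l : Nat.Partition n) : Antitone (l.cols.count ·) :=
  antitone_nat_of_succ_le fun j ↦ by
    rw [cols, Multiset.count_bind_range l.parts j]
    exact Nat.le_add_right _ _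

lemma cols_injective : Function.Injective (cols : Nat.Partition n → Multiset ℕ) := by
  intro l m h
  ext1
  ext (_ | j)
  · rw [Multiset.count_eq_zero_of_notMem fun h ↦ lt_irrefl 0 (l.parts_pos h),
      Multiset.count_eq_zero_of_notMem fun h ↦ lt_irrefl 0 (m.parts_pos h)]
  · have hl := Multiset.count_bind_range l.parts j
    have hm := Multiset.count_bind_range m.parts j
    simp only [cols] at h
    rw [h] at hl
    omega

lemma cols_eq_cons_of_stepDown {l : Nat.Partition n} {ν : Nat.Partition (n - 1)} {k : ℕ}
    (hk : k ∈ l.parts)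
    (hν : ν.parts = Multiset.filter (· ≠ 0) ((k - 1) ::ₘ l.parts.erase k)) :
    l.cols = (k - 1) ::ₘ ν.cols := by
  obtain ⟨k, rfl⟩ := Nat.exists_eq_succ_of_ne_zero (l.parts_pos hk).ne'
  rw [cols, cols, hν, Multiset.filter_ne_zero_bind_range, ← Multiset.cons_erase hk,
    Multiset.cons_bind, Multiset.cons_bind, Multiset.erase_cons_head, Multiset.range_succ]
  simp

lemma covBy_cols_of_stepDown {l : Nat.Partition n} {ν : Nat.Partition (n - 1)}
    (h : stepDown l ν) : ν.cols ⋖ l.cols := by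
  obtain ⟨k, hk, hν⟩ := h
  rw [cols_eq_cons_of_stepDown hk hν]
  exact Multiset.covBy_cons _ _

end Nat.Partition

namespace partitionGraph

open Nat.Partition

variable {n k : ℕ} {s : Finset (Nat.Partition n)} {u : Multiset ℕ} {l : Nat.Partition n}

lemma exists_covBy_of_adj {m : Nat.Partition n} (h : (partitionGraph n).Adj l m) :
    ∃ u, u ⋖ l.cols ∧ u ⋖ m.cols := by
  obtain ⟨-, ν, hl, hm⟩ := h
  exact ⟨ν.cols, covBy_cols_of_stepDown hl, covBy_cols_of_stepDown hm⟩

lemma card_add_one_of_covBy_cols (h : u ⋖ l.cols) : Multiset.card u + 1 = n := by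
  rw [← card_cols l, (Multiset.covBy_iff_le_card.1 h).2]

lemma exists_covBy_or_covBy (hs : (partitionGraph n).IsClique (s : Set (Nat.Partition n)))
    (hs₂ : 1 < #s) : (∃ u, ∀ l ∈ s, u ⋖ l.cols) ∨ ∃ v, ∀ l ∈ s, l.cols ⋖ v := by
  have hS : (cols '' (s : Set (Nat.Partition n))).Pairwise fun M M' ↦ ∃ u, u ⋖ M ∧ u ⋖ M' := by
    rintro _ ⟨l, hl, rfl⟩ _ ⟨m, hm, rfl⟩ hlm
    exact exists_covBy_of_adj (hs hl hm (ne_of_apply_ne _ hlm))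
  have hS₂ : (cols '' (s : Set (Nat.Partition n))).Nontrivial :=
    (one_lt_card_iff_nontrivial.1 hs₂).image cols_injective
  simpa using Multiset.exists_covBy_or_covBy_of_pairwise hS hS₂

lemma sum_range_card_add_card_le (hs₃ : 2 < #s) {v : Multiset ℕ} (hv : ∀ l ∈ s, l.cols ⋖ v) :
    ∑ i ∈ range #s, i + #s ≤ n + 1 := by
  choose! c hc using fun l hl ↦ (hv l hl).exists_multiset_cons
  have hinj : Set.InjOn c s := fun l hl m hm hlm ↦
    cols_injective ((Multiset.cons_inj_right (c l)).1 (by rw [hc l hl, hlm, hc m hm]))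
  have hC : #(s.image c) = #s := card_image_of_injOn hinj
  obtain ⟨l, hl⟩ := card_pos.1 (by omega : 0 < #s)
  have hv_card : Multiset.card v = n + 1 := by rw [← hc l hl, Multiset.card_cons, card_cols]
  have hsum := Multiset.sum_add_one_le_card_of_forall_cons (hC ▸ hs₃) fun c' hc' ↦ by
    obtain ⟨l, hl, rfl⟩ := mem_image.1 hc'
    exact ⟨l.cols, hc l hl, antitone_count_cols l⟩
  have hrange := sum_range_card_le_sum (s.image c)
  rw [sum_add_distrib, sum_const, smul_eq_mul, mul_one, hC, hv_card] at hsum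
  rw [hC] at hrange
  omega

lemma exists_cols_eq_cons (hs₃ : 2 < #s) (hu : ∀ l ∈ s, u ⋖ l.cols) :
    ∃ A : Finset ℕ, #A = #s ∧ A.val.bind Multiset.range ≤ u ∧
      ∀ l ∈ s, ∃ a ∈ A, l.cols = a ::ₘ u := by
  choose! a ha using fun l hl ↦ (hu l hl).exists_multiset_cons
  have hinj : Set.InjOn a s := fun l hl m hm hlm ↦
    cols_injective (by rw [← ha l hl, ← ha m hm, hlm])
  refine ⟨s.image a, card_image_of_injOn hinj, ?_,
    fun l hl ↦ ⟨a l, mem_image_of_mem a hl, (ha l hl).symm⟩⟩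
  refine Multiset.bind_range_le_of_forall_cons (by rwa [card_image_of_injOn hinj]) fun b hb ↦ ?_
  obtain ⟨l, hl, rfl⟩ := mem_image.1 hb
  rw [ha l hl]
  exact antitone_count_cols l

lemma sum_range_lt_of_isNClique (hs : (partitionGraph n).IsNClique k s) (hk : 2 < k) :
    ∑ i ∈ range k, i < n := by
  rw [← hs.card_eq] at hk ⊢
  rcases exists_covBy_or_covBy hs.isClique (by omega) with ⟨u, hu⟩ | ⟨v, hv⟩
  · obtain ⟨A, hA, hAu, -⟩ := exists_cols_eq_cons hk hu
    obtain ⟨l, hl⟩ := card_pos.1 (by omega : 0 < #s)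
    have hu_card := card_add_one_of_covBy_cols (hu l hl)
    have hle := Multiset.card_le_card hAu
    have hrange := sum_range_card_le_sum A
    rw [Multiset.card_bind_range] at hle
    rw [hA] at hrange
    omega
  · have := sum_range_card_add_card_le hk hv
    omega

lemma cols_eq_cons_of_isNClique (hs : (partitionGraph n).IsNClique k s) (hk : 2 < k)
    (hn : n = ∑ i ∈ range k, i + 1) :
    ∀ l ∈ s, ∃ a < k, l.cols = a ::ₘ (range k).val.bind Multiset.range := by
  rw [← hs.card_eq] at hk hn ⊢
  rcases exists_covBy_or_covBy hs.isClique (by omega) with ⟨u, hu⟩ | ⟨v, hv⟩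
  · obtain ⟨A, hA, hAu, hsA⟩ := exists_cols_eq_cons hk hu
    obtain ⟨l, hl⟩ := card_pos.1 (by omega : 0 < #s)
    have hu_card := card_add_one_of_covBy_cols (hu l hl)
    have hle := Multiset.card_le_card hAu
    rw [Multiset.card_bind_range] at hle
    have hsum : ∑ a ∈ A, a ≤ ∑ i ∈ range #A, i := by rw [hA]; omega
    obtain rfl : A = range #s := hA ▸ eq_range_card_of_sum_le hsum
    have hu' : (range #s).val.bind Multiset.range = u :=
      Multiset.eq_of_le_of_card_le hAu (by rw [Multiset.card_bind_range]; omega)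
    intro l hl
    obtain ⟨a, ha, hla⟩ := hsA l hl
    exact ⟨a, mem_range.1 ha, hu' ▸ hla⟩
  · have := sum_range_card_add_card_le hk hv
    omega

end partitionGraph

def staircase : Nat.Partition 21 where
  parts := {1, 2, 3, 4, 5, 6}
  parts_pos := by decide
  parts_sum := by decide

/-- The part `a` becomes `a + 1`; for `a = 0` the erasure does nothing and a part `1` appears. -/
def staircaseAddCell (a : Fin 7) : Nat.Partition 22 where
  parts := (a + 1 : ℕ) ::ₘ staircase.parts.erase a
  parts_pos := by fin_cases a <;> decide
  parts_sum := by fin_cases a <;> decide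

lemma staircase_parts_eq (a : Fin 7) : staircase.parts = Multiset.filter (· ≠ 0)
    (((a : ℕ) + 1 - 1) ::ₘ (staircaseAddCell a).parts.erase ((a : ℕ) + 1)) := by
  fin_cases a <;> decide

lemma succ_mem_staircaseAddCell_parts (a : Fin 7) : (a : ℕ) + 1 ∈ (staircaseAddCell a).parts :=
  Multiset.mem_cons_self _ (staircase.parts.erase a)

lemma stepDown_staircaseAddCell (a : Fin 7) : stepDown (staircaseAddCell a) staircase :=
  ⟨(a : ℕ) + 1, succ_mem_staircaseAddCell_parts a, staircase_parts_eq a⟩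

lemma cols_staircaseAddCell (a : Fin 7) :
    (staircaseAddCell a).cols = (a : ℕ) ::ₘ staircase.cols := by
  simpa using Nat.Partition.cols_eq_cons_of_stepDown (n := 22)
    (succ_mem_staircaseAddCell_parts a) (staircase_parts_eq a)

lemma cols_staircase : staircase.cols = (range 7).val.bind Multiset.range := by decide

def staircaseClique : Finset (Nat.Partition 22) := univ.image staircaseAddCell

lemma isNClique_staircaseClique : (partitionGraph 22).IsNClique 7 staircaseClique := by
  refine ⟨?_, ?_⟩
  · rintro _ hl _ hm hlm
    obtain ⟨a, -, rfl⟩ := mem_image.1 hl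
    obtain ⟨b, -, rfl⟩ := mem_image.1 hm
    exact ⟨hlm, staircase, stepDown_staircaseAddCell a, stepDown_staircaseAddCell b⟩
  · refine (card_image_of_injective _ fun a b hab ↦ Fin.ext ?_).trans (card_fin 7)
    simpa [cols_staircaseAddCell] using congrArg Nat.Partition.cols hab

lemma eq_staircaseClique {s : Finset (Nat.Partition 22)}
    (hs : (partitionGraph 22).IsNClique 7 s) : s = staircaseClique := by
  refine eq_of_subset_of_card_le (fun l hl ↦ ?_) ?_
  · obtain ⟨a, ha, hla⟩ :=
      partitionGraph.cols_eq_cons_of_isNClique hs (by norm_num) (by decide) l hl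
    refine mem_image.2 ⟨⟨a, ha⟩, mem_univ _, Nat.Partition.cols_injective ?_⟩
    rw [cols_staircaseAddCell, hla, cols_staircase]
  · rw [hs.card_eq, isNClique_staircaseClique.card_eq]

theorem stmt7 :
    (∀ n : ℕ, 1 ≤ n → n ≤ 21 → cliqueCount n 7 = 0) ∧ cliqueCount 22 7 = 1 := by
  refine ⟨fun n _ hn ↦ ?_, ?_⟩
  · rw [cliqueCount, Set.ncard_eq_zero]
    refine Set.eq_empty_of_forall_notMem fun s hs ↦ ?_
    have := partitionGraph.sum_range_lt_of_isNClique hs (by norm_num)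
    rw [sum_range_id] at this
    omega
  · rw [cliqueCount, Set.ncard_eq_one]
    exact ⟨staircaseClique, Set.ext fun s ↦
      ⟨eq_staircaseClique, fun h ↦ h ▸ isNClique_staircaseClique⟩⟩
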